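/- arXiv:math/9711224 — 6 statements merged into one kernel-verified Lean document; each statement's English description precedes it below -/
import Mathlib

section
/- In a Rees matrix semigroup S = M(G, M) over a group G with regular sandwich matrix M, for any two nonzero elements s and t of S, there exist elements u, v in S such that u*s*v = t. -/
/-- Multiplication in the Rees matrix semigroup `M(G, M)`; elements are `0` (modeled
as `none`) and triples `[i, g, λ]`; the sandwich matrix has entries in `G ∪ {0}`,
modeled as `Option G`. -/
def reesMul {I Λ G : Type} [Mul G] (M : Λ → I → Option G) :
    Option (I × G × Λ) → Option (I × G × Λ) → Option (I × G × Λ)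
  | some (i, g, l), some (j, h, c) => (M l j).map fun m => (i, g * m * h, c)
  | _, _ => none

/-- In a Rees matrix semigroup over a group with regular sandwich matrix, for any two
nonzero elements `s`, `t` there exist `u`, `v` with `u*s*v = t`. -/
theorem stmt0 {I Λ G : Type} [Fintype I] [Fintype Λ] [Group G]
    (M : Λ → I → Option G)
    (hreg : (∀ l : Λ, ∃ i : I, M l i ≠ none) ∧ (∀ i : I, ∃ l : Λ, M l i ≠ none))
    (s t : Option (I × G × Λ)) (hs : s ≠ none) (ht : t ≠ none) :
    ∃ u v : Option (I × G × Λ), reesMul M (reesMul M u s) v = t := by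
  obtain ⟨⟨i, g, l⟩, rfl⟩ := Option.ne_none_iff_exists'.mp hs
  obtain ⟨⟨j, h, c⟩, rfl⟩ := Option.ne_none_iff_exists'.mp ht
  obtain ⟨l₀, hl₀⟩ := hreg.2 i
  obtain ⟨i₁, hi₁⟩ := hreg.1 l
  obtain ⟨a, ha⟩ := Option.ne_none_iff_exists'.mp hl₀
  obtain ⟨b, hb⟩ := Option.ne_none_iff_exists'.mp hi₁
  refine ⟨some (j, (a * g)⁻¹, l₀), some (i₁, b⁻¹ * h, c), ?_⟩
  simp [reesMul, ha, hb, mul_assoc]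
end

section
/- The multiplicative semigroup L_n(F) consisting of the zero matrix together with all n×n matrices of rank 1 over a finite field F is isomorphic to a Rees matrix semigroup M(F*, T), where F* is the multiplicative group of F, the index sets are indexed by the one-dimensional subspaces of F^n (with chosen representative vectors v_i), and T(λ, i) = v_λᵀ v_i. -/
open Matrix Module Projectivization

/-!
Every nonzero matrix of rank at most one is an outer product `u wᵀ`, which determines the points
`[u]` and `[w]` of projective space. Fixing a representative `v_p` of each point `p`, the map
`[i, c, λ] ↦ c v_i v_λᵀ` is therefore a bijection from the nonzero Rees elements onto the nonzero
matrices of rank at most one, and the identity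
`(v_i v_λᵀ)(v_j v_γᵀ) = (v_λ ⬝ v_j) v_i v_γᵀ` makes it turn the Rees product with sandwich
`T(λ, j) = v_λ ⬝ v_j` into matrix multiplication.
-/

section Projectivization

variable {K V : Type*} [DivisionRing K] [AddCommGroup V] [Module K V]

theorem Projectivization.mk_smul_eq_mk {a : V} (ha : a ≠ 0) (c : Kˣ) :
    mk K ((c : K) • a) (smul_ne_zero c.ne_zero ha) = mk K a ha :=
  (mk_eq_mk_iff K _ _ _ ha).2 ⟨c, rfl⟩

theorem Projectivization.rep_mem_equivSubmodule_symm
    (U : {H : Submodule K V // finrank K H = 1}) : ((equivSubmodule K V).symm U).rep ∈ U.1 := by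
  have hU : ((equivSubmodule K V).symm U).submodule = U.1 :=
    congrArg Subtype.val ((equivSubmodule K V).apply_symm_apply U)
  rw [← hU, submodule_eq]
  exact Submodule.mem_span_singleton_self _

end Projectivization

section RankOne

variable {K : Type*} [Field K] {m n : Type*}

theorem Matrix.exists_eq_vecMulVec_of_rank_le_one [Fintype n] {A : Matrix m n K}
    (hA : A.rank ≤ 1) : ∃ (u : m → K) (w : n → K), A = vecMulVec u w := by
  have := Module.Finite.span_of_finite K (Set.finite_range A.col)
  rw [rank_eq_finrank_span_cols, finrank_le_one_iff] at hA
  obtain ⟨u, hu⟩ := hA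
  choose w hw using fun j => hu ⟨A.col j, Submodule.subset_span ⟨j, rfl⟩⟩
  refine ⟨u, w, Matrix.ext fun i j => ?_⟩
  have hcol := congrFun (congrArg Subtype.val (hw j)) i
  rw [vecMulVec_apply, mul_comm]
  simpa using hcol.symm

theorem Projectivization.mk_eq_mk_of_vecMulVec_eq {a a' : m → K} {b b' : n → K} (ha : a ≠ 0)
    (hb : b ≠ 0) (ha' : a' ≠ 0) (h : vecMulVec a b = vecMulVec a' b') :
    mk K a ha = mk K a' ha' := by
  obtain ⟨y, hy⟩ := Function.ne_iff.1 hb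
  refine (mk_eq_mk_iff' K a a' ha ha').2 ⟨(b y)⁻¹ * b' y, funext fun x => ?_⟩
  have hxy : a x * b y = a' x * b' y := congrFun (congrFun h x) y
  simp only [Pi.smul_apply, smul_eq_mul]
  rw [mul_assoc, mul_comm (b' y), ← hxy, mul_comm (a x), ← mul_assoc, inv_mul_cancel₀ hy,
    one_mul]

end RankOne

section Rees

variable {K : Type} [Field K] {ι : Type*} [Fintype ι] {I Λ : Type}

def reesToMatrix (u : I → ι → K) (w : Λ → ι → K) : Option (I × Kˣ × Λ) → Matrix ι ι K
  | none => 0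
  | some (i, c, l) => (c : K) • vecMulVec (u i) (w l)

def dotSandwich [DecidableEq K] (u : I → ι → K) (w : Λ → ι → K) : Λ → I → Option Kˣ :=
  fun l i => if h : w l ⬝ᵥ u i = 0 then none else some (Units.mk0 _ h)

variable (u : I → ι → K) (w : Λ → ι → K)

theorem rank_reesToMatrix_le_one (x : Option (I × Kˣ × Λ)) :
    (reesToMatrix u w x).rank ≤ 1 := by
  rcases x with _ | ⟨i, c, l⟩
  · simp [reesToMatrix]
  · simpa [reesToMatrix] using rank_vecMulVec_le ((c : K) • u i) (w l)

theorem reesToMatrix_reesMul [DecidableEq K] (x y : Option (I × Kˣ × Λ)) :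
    reesToMatrix u w (reesMul (dotSandwich u w) x y) =
      reesToMatrix u w x * reesToMatrix u w y := by
  rcases x with _ | ⟨i, g, l⟩ <;> rcases y with _ | ⟨j, h, m⟩
  case some.some =>
    by_cases hd : w l ⬝ᵥ u j = 0
    · simp [reesMul, reesToMatrix, dotSandwich, hd, vecMulVec_mul_vecMulVec]
    · simp [reesMul, reesToMatrix, dotSandwich, hd, vecMulVec_mul_vecMulVec, smul_smul]
      congr 1
      ring
  all_goals simp [reesMul, reesToMatrix]

variable {u w}

theorem reesToMatrix_injective (hu : ∀ i, u i ≠ 0) (hw : ∀ l, w l ≠ 0)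
    (hu_inj : Function.Injective fun i => mk K (u i) (hu i))
    (hw_inj : Function.Injective fun l => mk K (w l) (hw l)) :
    Function.Injective (reesToMatrix u w) := by
  have hne : ∀ i (c : Kˣ) l, (c : K) • vecMulVec (u i) (w l) ≠ 0 := fun i c l =>
    smul_ne_zero c.ne_zero (vecMulVec_ne_zero (hu i) (hw l))
  rintro (_ | ⟨i, c, l⟩) (_ | ⟨i', c', l'⟩) h
  · rfl
  · exact absurd h.symm (hne i' c' l')
  · exact absurd h (hne i c l)
  simp only [reesToMatrix, ← smul_vecMulVec] at h
  have hi : i = i' := hu_inj <| by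
    dsimp only
    rw [← mk_smul_eq_mk (hu i) c, ← mk_smul_eq_mk (hu i') c']
    exact mk_eq_mk_of_vecMulVec_eq _ (hw l) _ h
  have hl : l = l' := hw_inj <| by
    dsimp only
    have h' := congrArg transpose h
    rw [transpose_vecMulVec, transpose_vecMulVec] at h'
    exact mk_eq_mk_of_vecMulVec_eq (hw l) (smul_ne_zero c.ne_zero (hu i)) (hw l') h'
  subst hi hl
  simp only [smul_vecMulVec] at h
  rw [smul_left_injective K (vecMulVec_ne_zero (hu i) (hw l)) h |> Units.val_injective]

theorem exists_reesToMatrix_eq (hu : ∀ i, u i ≠ 0) (hw : ∀ l, w l ≠ 0)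
    (hu_surj : Function.Surjective fun i => mk K (u i) (hu i))
    (hw_surj : Function.Surjective fun l => mk K (w l) (hw l))
    {A : Matrix ι ι K} (hA : A.rank ≤ 1) : ∃ x, reesToMatrix u w x = A := by
  by_cases h0 : A = 0
  · exact ⟨none, h0.symm⟩
  obtain ⟨a, b, rfl⟩ := exists_eq_vecMulVec_of_rank_le_one hA
  obtain ⟨ha, hb⟩ : a ≠ 0 ∧ b ≠ 0 := by simpa [not_or] using h0
  obtain ⟨i, hi⟩ := hu_surj (mk K a ha)
  obtain ⟨l, hl⟩ := hw_surj (mk K b hb)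
  obtain ⟨s, rfl⟩ := (mk_eq_mk_iff K _ _ ha (hu i)).1 hi.symm
  obtain ⟨t, rfl⟩ := (mk_eq_mk_iff K _ _ hb (hw l)).1 hl.symm
  refine ⟨some (i, s * t, l), ?_⟩
  simp [reesToMatrix, Units.smul_def, smul_smul, mul_comm]

end Rees

theorem stmt6_general (F : Type) [Field F] [DecidableEq F] (n : ℕ) :
    ∃ v : {U : Submodule F (Fin n → F) // Module.finrank F U = 1} → (Fin n → F),
      (∀ U, v U ∈ U.1 ∧ v U ≠ 0) ∧
      ∃ T : {U : Submodule F (Fin n → F) // Module.finrank F U = 1} →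
            {U : Submodule F (Fin n → F) // Module.finrank F U = 1} → Option Fˣ,
        (∀ l i, T l i =
          if h : dotProduct (v l) (v i) = 0 then none
          else some (Units.mk0 _ h)) ∧
        ∃ φ : {A : Matrix (Fin n) (Fin n) F // A.rank ≤ 1} →
              Option ({U : Submodule F (Fin n → F) // Module.finrank F U = 1} × Fˣ ×
                      {U : Submodule F (Fin n → F) // Module.finrank F U = 1}),
          Function.Bijective φ ∧
          (∀ A : {A : Matrix (Fin n) (Fin n) F // A.rank ≤ 1}, A.1 = 0 → φ A = none) ∧
          ∀ A B C : {A : Matrix (Fin n) (Fin n) F // A.rank ≤ 1},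
            C.1 = A.1 * B.1 → φ C = reesMul T (φ A) (φ B) := by
  set e := (equivSubmodule F (Fin n → F)).symm
  set v := fun U => (e U).rep
  have hv : ∀ U, v U ≠ 0 := fun U => rep_nonzero _
  have hbij : Function.Bijective fun U => mk F (v U) (hv U) :=
    (funext fun U => mk_rep (e U) : (fun U => mk F (v U) (hv U)) = e) ▸ e.bijective
  have hψ : Function.Bijective fun x => (⟨reesToMatrix v v x, rank_reesToMatrix_le_one v v x⟩ :
      {A : Matrix (Fin n) (Fin n) F // A.rank ≤ 1}) := by
    refine ⟨fun x y h => ?_, fun A => ?_⟩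
    · exact reesToMatrix_injective hv hv hbij.1 hbij.1 (congrArg Subtype.val h)
    · obtain ⟨x, hx⟩ := exists_reesToMatrix_eq hv hv hbij.2 hbij.2 A.2
      exact ⟨x, Subtype.ext hx⟩
  set ψ := Equiv.ofBijective _ hψ
  refine ⟨v, fun U => ⟨rep_mem_equivSubmodule_symm U, hv U⟩, dotSandwich v v, fun _ _ => rfl,
    ψ.symm, ψ.symm.bijective, fun A hA => ψ.symm_apply_eq.2 (Subtype.ext hA),
    fun A B C hC => ψ.symm_apply_eq.2 (Subtype.ext ?_)⟩
  change C.1 = reesToMatrix v v _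
  rw [reesToMatrix_reesMul, hC]
  congr 1 <;> exact congrArg Subtype.val (ψ.apply_symm_apply _).symm

/-- `L_n(F)`, the semigroup of `n×n` matrices of rank at most 1 (rank-1 matrices
together with the zero matrix) over a finite field `F`, is isomorphic to the Rees
matrix semigroup `M(F*, T)` indexed by the one-dimensional subspaces of `F^n` with
chosen representative vectors `v`, where `T(λ, i) = vᵀ_λ v_i` (interpreted as `0` of
the Rees structure when the dot product vanishes). -/
theorem stmt6 (F : Type) [Field F] [Fintype F] [DecidableEq F] (n : ℕ) (hn : 1 ≤ n) :
    ∃ v : {U : Submodule F (Fin n → F) // Module.finrank F U = 1} → (Fin n → F),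
      (∀ U, v U ∈ U.1 ∧ v U ≠ 0) ∧
      ∃ T : {U : Submodule F (Fin n → F) // Module.finrank F U = 1} →
            {U : Submodule F (Fin n → F) // Module.finrank F U = 1} → Option Fˣ,
        (∀ l i, T l i =
          if h : dotProduct (v l) (v i) = 0 then none
          else some (Units.mk0 _ h)) ∧
        ∃ φ : {A : Matrix (Fin n) (Fin n) F // A.rank ≤ 1} →
              Option ({U : Submodule F (Fin n → F) // Module.finrank F U = 1} × Fˣ ×
                      {U : Submodule F (Fin n → F) // Module.finrank F U = 1}),
          Function.Bijective φ ∧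
          (∀ A : {A : Matrix (Fin n) (Fin n) F // A.rank ≤ 1}, A.1 = 0 → φ A = none) ∧
          ∀ A B C : {A : Matrix (Fin n) (Fin n) F // A.rank ≤ 1},
            C.1 = A.1 * B.1 → φ C = reesMul T (φ A) (φ B) :=
  stmt6_general F n
end

section
/- Let S be a Rees matrix semigroup and p, q polynomials (products of variables and constants from S) over S. If the directed graphs G(p) and G(q) are equal, then Z(p) = Z(q), i.e., p and q vanish on exactly the same tuples of arguments. -/
/-- Product of a nonempty list. -/
def prodWith {α : Type} (f : α → α → α) : List α → Option α
  | [] => none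
  | a :: t => some (t.foldl f a)

/-- `a`, `b` occur as a consecutive pair (i.e. `ab` syntactically divides `w`). -/
def consec {α : Type} (w : List α) (a b : α) : Prop :=
  ∃ l₁ l₂ : List α, w = l₁ ++ a :: b :: l₂

lemma isChain_iff_forall_consec {α : Type} {R : α → α → Prop} {l : List α} :
    l.IsChain R ↔ ∀ a b, consec l a b → R a b := by
  rw [List.isChain_iff_forall_rel_of_append_cons_cons]
  exact ⟨fun h a b ⟨_, _, hl⟩ => h hl, fun h _ _ _ _ hl => h _ _ ⟨_, _, hl⟩⟩

section Rees

variable {I Λ G : Type} [Mul G] (M : Λ → I → Option G)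

@[simp]
lemma reesMul_none_left (x : Option (I × G × Λ)) : reesMul M none x = none := by
  cases x <;> rfl

@[simp]
lemma reesMul_none_right (x : Option (I × G × Λ)) : reesMul M x none = none := by
  rcases x with _ | ⟨i, g, l⟩ <;> rfl

lemma ne_none_of_reesMul_ne_none {x y : Option (I × G × Λ)} (hxy : reesMul M x y ≠ none) :
    x ≠ none ∧ y ≠ none :=
  ⟨by rintro rfl; simp at hxy, by rintro rfl; simp at hxy⟩

lemma reesMul_reesMul_eq_none_iff {x y z : Option (I × G × Λ)} (hxy : reesMul M x y ≠ none) :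
    reesMul M (reesMul M x y) z = none ↔ reesMul M y z = none := by
  rcases x with _ | ⟨i, g, l⟩
  · simp at hxy
  rcases y with _ | ⟨j, h, c⟩
  · simp at hxy
  rcases z with _ | ⟨k, f, d⟩
  · simp
  rcases hm : M l j with _ | m
  · simp [reesMul, hm] at hxy
  · simp [reesMul, hm, Option.map_eq_none_iff]

lemma foldl_reesMul_ne_none_iff (t : List (Option (I × G × Λ))) (a : Option (I × G × Λ)) :
    t.foldl (reesMul M) a ≠ none ↔
      (∀ x ∈ a :: t, x ≠ none) ∧ (a :: t).IsChain (fun x y => reesMul M x y ≠ none) := by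
  induction t generalizing a with
  | nil => simp
  | cons b t ih =>
    have tail_iff (hab : reesMul M a b ≠ none) :
        (reesMul M a b :: t).IsChain (fun x y => reesMul M x y ≠ none) ↔
          (b :: t).IsChain (fun x y => reesMul M x y ≠ none) := by
      simp only [List.isChain_cons (l := t), ne_eq, reesMul_reesMul_eq_none_iff M hab]
    rw [List.foldl_cons, ih, List.isChain_cons_cons]
    simp only [List.forall_mem_cons]
    constructor
    · rintro ⟨⟨hab, ht⟩, hchain⟩
      obtain ⟨ha, hb⟩ := ne_none_of_reesMul_ne_none M hab
      exact ⟨⟨ha, hb, ht⟩, hab, (tail_iff hab).1 hchain⟩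
    · rintro ⟨⟨-, -, ht⟩, hab, hchain⟩
      exact ⟨⟨hab, ht⟩, (tail_iff hab).2 hchain⟩

lemma prodWith_reesMul_eq_some_none_iff {w : List (Option (I × G × Λ))} (hw : w ≠ []) :
    prodWith (reesMul M) w = some none ↔
      ¬ ((∀ x ∈ w, x ≠ none) ∧ w.IsChain (fun x y => reesMul M x y ≠ none)) := by
  obtain ⟨a, t, rfl⟩ := List.exists_cons_of_ne_nil hw
  rw [← foldl_reesMul_ne_none_iff, not_not]
  exact Option.some_inj

end Rees

/-- Lemma 2.4: if two polynomials `p`, `q` over a Rees matrix semigroup (words in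
variables from `V` and constants from `S`) have the same graph `G(p) = G(q)` (same
vertices, i.e. occurring symbols, and same edges), then `Z(p) = Z(q)`: they vanish
on exactly the same evaluations. -/
theorem stmt9 {I Λ G V : Type} [Group G] (M : Λ → I → Option G)
    (p q : List (V ⊕ Option (I × G × Λ))) (hp : p ≠ []) (hq : q ≠ [])
    (hvert : ∀ c, c ∈ p ↔ c ∈ q)
    (hedge : ∀ c d, consec p c d ↔ consec q c d) :
    ∀ e : V → Option (I × G × Λ),
      (prodWith (reesMul M) (p.map (Sum.elim e id)) = some none ↔
       prodWith (reesMul M) (q.map (Sum.elim e id)) = some none) := by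
  intro e
  rw [prodWith_reesMul_eq_some_none_iff M (mt List.map_eq_nil_iff.1 hp),
    prodWith_reesMul_eq_some_none_iff M (mt List.map_eq_nil_iff.1 hq), List.isChain_map,
    List.isChain_map, isChain_iff_forall_consec, isChain_iff_forall_consec]
  simp only [List.forall_mem_map, hvert, hedge]
end

section
/- Let S = M(G, M) be a Rees matrix semigroup with regular matrix M. For a polynomial p over S with variables x₁,…,x_n, fix a nonzero element s ∈ S and let ρ(p) be the polynomial obtained by replacing each occurrence of x_i by x_i·s·y_i for fresh variables y_i. If T is an ideal extension of S in which S is a completely 0-minimal ideal, then p is identically 0 over S if and only if ρ(p) is identically 0 over T. -/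
/-- The substitution `ρ`: each occurrence of the variable `x_i` is replaced by
`x_i · s₀ · y_i` (with `y_i` a fresh variable, modeled by the right summand of
`Fin n ⊕ Fin n`); constants are left unchanged. -/
def rhoLetter {n : ℕ} {S : Type} (s₀ : S) :
    (Fin n ⊕ S) → List ((Fin n ⊕ Fin n) ⊕ S)
  | Sum.inl i => [Sum.inl (Sum.inl i), Sum.inr s₀, Sum.inl (Sum.inr i)]
  | Sum.inr c => [Sum.inr c]

theorem foldl_assoc' {T : Type} (mT : T → T → T)
    (hassoc : ∀ a b c : T, mT (mT a b) c = mT a (mT b c)) :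
    ∀ (l : List T) (a b : T), List.foldl mT (mT a b) l = mT a (List.foldl mT b l)
  | [], _, _ => rfl
  | c :: l, a, b => by
    simp only [List.foldl_cons, hassoc]
    exact foldl_assoc' mT hassoc l a (mT b c)

theorem key_foldl {α S T : Type} (mS : S → S → S) (mT : T → T → T)
    (hassoc : ∀ a b c : T, mT (mT a b) c = mT a (mT b c))
    (ι : S → T) (hι : ∀ a b, ι (mS a b) = mT (ι a) (ι b))
    (F : α → List T) (g : α → S)
    (hF : ∀ x, ∃ h t, F x = h :: t ∧ List.foldl mT h t = ι (g x)) :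
    ∀ (p : List α) (s : S),
      List.foldl mT (ι s) (p.flatMap F) = ι (List.foldl mS s (p.map g))
  | [], s => rfl
  | x :: p, s => by
    obtain ⟨h, t, hFx, hft⟩ := hF x
    have h1 : List.foldl mT (ι s) (h :: t) = ι (mS s (g x)) := by
      simp only [List.foldl_cons]
      rw [foldl_assoc' mT hassoc, hft, ← hι]
    simp only [List.flatMap_cons, List.map_cons, List.foldl_cons, hFx]
    rw [List.foldl_append, h1]
    exact key_foldl mS mT hassoc ι hι F g hF p (mS s (g x))

theorem key {α S T : Type} (mS : S → S → S) (mT : T → T → T)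
    (hassoc : ∀ a b c : T, mT (mT a b) c = mT a (mT b c))
    (ι : S → T) (hι : ∀ a b, ι (mS a b) = mT (ι a) (ι b))
    (F : α → List T) (g : α → S)
    (hF : ∀ x, ∃ h t, F x = h :: t ∧ List.foldl mT h t = ι (g x)) :
    ∀ (p : List α), p ≠ [] →
      prodWith mT (p.flatMap F) = (prodWith mS (p.map g)).map ι := by
  rintro (_ | ⟨x, p⟩) hp
  · exact absurd rfl hp
  obtain ⟨h, t, hFx, hft⟩ := hF x
  simp only [List.flatMap_cons, List.map_cons, hFx, List.cons_append, prodWith,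
    Option.map_some]
  congr 1
  rw [List.foldl_append, hft]
  exact key_foldl mS mT hassoc ι hι F g hF p (g x)

/-- Let `S = M(G, M)` with `M` regular, and let `T` be an ideal extension of `S`
(via the injective multiplicative map `ι`) in which `S` is a completely 0-minimal
ideal.  Then a polynomial `p` over `S` is identically 0 over `S` iff `ρ(p)` is
identically 0 over `T`. -/
theorem stmt10 {I Λ G : Type} [Group G] (M : Λ → I → Option G)
    (hreg : (∀ l : Λ, ∃ i : I, M l i ≠ none) ∧ (∀ i : I, ∃ l : Λ, M l i ≠ none))
    (T : Type) (mulT : T → T → T)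
    (hassoc : ∀ a b c : T, mulT (mulT a b) c = mulT a (mulT b c))
    (ι : Option (I × G × Λ) → T) (hinj : Function.Injective ι)
    (hhom : ∀ a b, ι (reesMul M a b) = mulT (ι a) (ι b))
    (hideal : ∀ (t : T) (s : Option (I × G × Λ)),
        (∃ s', ι s' = mulT t (ι s)) ∧ (∃ s', ι s' = mulT (ι s) t))
    (hzero : ∀ t : T, mulT t (ι none) = ι none ∧ mulT (ι none) t = ι none)
    (hmin : ∀ s t : Option (I × G × Λ), s ≠ none → t ≠ none →
        ∃ u v, reesMul M (reesMul M u s) v = t)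
    (n : ℕ) (s₀ : Option (I × G × Λ)) (hs₀ : s₀ ≠ none)
    (p : List (Fin n ⊕ Option (I × G × Λ))) (hp : p ≠ []) :
    (∀ e : Fin n → Option (I × G × Λ),
        prodWith (reesMul M) (p.map (Sum.elim e id)) = some none) ↔
    (∀ e : (Fin n ⊕ Fin n) → T,
        prodWith mulT ((p.flatMap (rhoLetter s₀)).map (Sum.elim e ι)) = some (ι none)) := by
  constructor
  · -- S-identity → T-identity
    intro hS e
    have ha : ∀ i : Fin n, ∃ a : Option (I × G × Λ),
        ι a = mulT (mulT (e (Sum.inl i)) (ι s₀)) (e (Sum.inr i)) := by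
      intro i
      obtain ⟨s', hs'⟩ := (hideal (e (Sum.inl i)) s₀).1
      obtain ⟨s'', hs''⟩ := (hideal (e (Sum.inr i)) s').2
      exact ⟨s'', by rw [hs'', hs']⟩
    choose a haspec using ha
    rw [List.map_flatMap]
    rw [key (reesMul M) mulT hassoc ι hhom
      (fun x => (rhoLetter s₀ x).map (Sum.elim e ι)) (Sum.elim a id) ?hF p hp]
    case hF =>
      rintro (i | c)
      · refine ⟨e (Sum.inl i), [ι s₀, e (Sum.inr i)], rfl, ?_⟩
        simp only [List.foldl_cons, List.foldl_nil]
        exact (haspec i).symm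
      · exact ⟨ι c, [], rfl, rfl⟩
    rw [hS a]
    rfl
  · -- T-identity → S-identity
    intro hT e
    have hu : ∀ i : Fin n, ∃ u v : Option (I × G × Λ),
        reesMul M (reesMul M u s₀) v = e i := by
      intro i
      by_cases hei : e i = none
      · refine ⟨none, none, ?_⟩
        rw [show reesMul M none s₀ = none from rfl, hei]
        rfl
      · exact hmin s₀ (e i) hs₀ hei
    choose u v huv using hu
    have hT' := hT (Sum.elim (fun i => ι (u i)) (fun i => ι (v i)))
    rw [List.map_flatMap] at hT'
    rw [key (reesMul M) mulT hassoc ι hhom _ (Sum.elim e id) ?hF p hp] at hT'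
    case hF =>
      rintro (i | c)
      · refine ⟨ι (u i), [ι s₀, ι (v i)], rfl, ?_⟩
        simp only [List.foldl_cons, List.foldl_nil, ← hhom]
        rw [huv i]
        rfl
      · exact ⟨ι c, [], rfl, rfl⟩
    obtain ⟨x, hx⟩ : ∃ x, prodWith (reesMul M) (p.map (Sum.elim e id)) = some x := by
      cases hq : p.map (Sum.elim e id) with
      | nil => exact absurd (List.map_eq_nil_iff.mp hq) hp
      | cons h t => exact ⟨_, rfl⟩
    rw [hx] at hT' ⊢
    simp only [Option.map_some] at hT'
    exact congrArg some (hinj (Option.some.inj hT'))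
end

section
/- Let S = M(G, M) be a Rees matrix semigroup with regular structure matrix M, let p be a polynomial over S, and let y₁, y₂ be variables not occurring in p; set p′ = y₁·p·y₂. Then for any fixed nonzero b ∈ S, the equation p′ = b has a solution in S if and only if p is not identically 0 over S. -/
lemma rees_assoc {I Λ G : Type} [Group G] (M : Λ → I → Option G) :
    ∀ x y z, reesMul M (reesMul M x y) z = reesMul M x (reesMul M y z) := by
  rintro (_|⟨i,g,l⟩) (_|⟨j,h,c⟩) (_|⟨k,f,d⟩) <;>
    simp [reesMul] <;>
    rcases hc : M l j with _|m <;> simp [reesMul, hc] <;>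
    rcases hd : M c k with _|m' <;> simp [reesMul, hc, hd, mul_assoc]

lemma rees_none_right {I Λ G : Type} [Mul G] (M : Λ → I → Option G) (x) :
    reesMul M x none = none := by cases x <;> rfl

lemma foldl_op {α : Type} {f : α → α → α}
    (hf : ∀ x y z, f (f x y) z = f x (f y z)) (t : List α) :
    ∀ a h, t.foldl f (f a h) = f a (t.foldl f h) := by
  induction t with
  | nil => intro a h; rfl
  | cons x s ih => intro a h; simp only [List.foldl]; rw [hf, ih]

lemma prodWith_cons {α : Type} (f : α → α → α) (a : α) (t : List α) :
    prodWith f (a :: t) = some (t.foldl f a) := rfl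

lemma elim_map {n : ℕ} {S : Type} (e : (Fin n ⊕ Fin 2) → S) (x : Fin n ⊕ S) :
    Sum.elim e id (Sum.map Sum.inl id x) = Sum.elim (fun v => e (Sum.inl v)) id x := by
  cases x <;> rfl

/-- Let `S = M(G, M)` with `M` regular, `p` a polynomial over `S`, and `y₁, y₂`
fresh variables (the right summand `Fin 2`); set `p′ = y₁·p·y₂`.  For any fixed
nonzero `b ∈ S`, the equation `p′ = b` has a solution in `S` iff `p` is not
identically 0 over `S`. -/
theorem stmt11 {I Λ G : Type} [Group G] (M : Λ → I → Option G)
    (hreg : (∀ l : Λ, ∃ i : I, M l i ≠ none) ∧ (∀ i : I, ∃ l : Λ, M l i ≠ none))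
    (n : ℕ) (p : List (Fin n ⊕ Option (I × G × Λ))) (hp : p ≠ [])
    (b : I × G × Λ) :
    (∃ e : (Fin n ⊕ Fin 2) → Option (I × G × Λ),
        prodWith (reesMul M)
          ((((Sum.inl (Sum.inr (0 : Fin 2)) : (Fin n ⊕ Fin 2) ⊕ Option (I × G × Λ)) :: p.map (Sum.map Sum.inl id))
              ++ [Sum.inl (Sum.inr (1 : Fin 2))]).map (Sum.elim e id))
          = some (some b)) ↔
    ¬ (∀ e : Fin n → Option (I × G × Λ),
        prodWith (reesMul M) (p.map (Sum.elim e id)) = some none) := by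
  obtain ⟨h0, t, rfl⟩ : ∃ h0 t, p = h0 :: t := by
    cases p with
    | nil => exact absurd rfl hp
    | cons a t => exact ⟨a, t, rfl⟩
  have hassoc := rees_assoc M
  -- compute the evaluated big list product
  have key : ∀ e : (Fin n ⊕ Fin 2) → Option (I × G × Λ),
      prodWith (reesMul M)
        ((((Sum.inl (Sum.inr (0 : Fin 2)) : (Fin n ⊕ Fin 2) ⊕ Option (I × G × Λ)) :: (h0 :: t).map (Sum.map Sum.inl id))
            ++ [Sum.inl (Sum.inr (1 : Fin 2))]).map (Sum.elim e id))
        = some (reesMul M (reesMul M (e (Sum.inr 0))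
            ((t.map (Sum.elim (fun v => e (Sum.inl v)) id)).foldl (reesMul M)
              (Sum.elim (fun v => e (Sum.inl v)) id h0))) (e (Sum.inr 1))) := by
    intro e
    have hl : List.map (Sum.elim e id)
          (((Sum.inl (Sum.inr (0 : Fin 2)) : (Fin n ⊕ Fin 2) ⊕ Option (I × G × Λ)) :: (h0 :: t).map (Sum.map Sum.inl id))
            ++ [Sum.inl (Sum.inr (1 : Fin 2))])
        = (e (Sum.inr 0)) :: ((Sum.elim (fun v => e (Sum.inl v)) id h0
            :: t.map (Sum.elim (fun v => e (Sum.inl v)) id)) ++ [e (Sum.inr 1)]) := by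
      simp [List.map_map, elim_map e]
    rw [hl, prodWith_cons]
    simp only [List.foldl_cons, List.foldl_append, List.foldl_nil]
    rw [foldl_op hassoc]
  constructor
  · rintro ⟨e, he⟩ hall
    rw [key e] at he
    have := hall (fun v => e (Sum.inl v))
    simp only [prodWith, List.map_cons, Option.some.injEq] at this he
    rw [this, rees_none_right] at he
    simp [reesMul] at he
  · intro hne
    have hex : ∃ e : Fin n → Option (I × G × Λ),
        (t.map (Sum.elim e id)).foldl (reesMul M) (Sum.elim e id h0) ≠ none := by
      by_contra hc
      push_neg at hc
      exact hne fun e => by simp [prodWith, hc e]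
    obtain ⟨e, hv⟩ := hex
    obtain ⟨⟨i, g, l⟩, hvv⟩ := Option.ne_none_iff_exists'.mp hv
    obtain ⟨ib, gb, lb⟩ := b
    obtain ⟨l0, hl0⟩ := hreg.2 i
    obtain ⟨m, hm⟩ := Option.ne_none_iff_exists'.mp hl0
    obtain ⟨i2, hi2⟩ := hreg.1 l
    obtain ⟨m2, hm2⟩ := Option.ne_none_iff_exists'.mp hi2
    refine ⟨Sum.elim e (fun k => if k = 0 then some (ib, 1, l0)
      else some (i2, m2⁻¹ * g⁻¹ * m⁻¹ * gb, lb)), ?_⟩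
    rw [key]
    simp only [Sum.elim_inl, Sum.elim_inr, if_pos rfl]
    norm_num
    rw [hvv]
    simp [reesMul, hm, hm2]
    group
end

section
/- A regular m×n 0-1 matrix M is totally balanced (for all α ≠ β and i ≠ j, if M(α,i) = M(α,j) = M(β,i) = 1 then M(β,j) = 1) if and only if the following equivalent condition holds: for all i ≠ j in I, if some row λ has M(λ,i) = M(λ,j) = 1 then the columns i and j of M are equal, and for all α ≠ β in Λ, if some column r has M(α,r) = M(β,r) = 1 then the rows α and β of M are equal. -/
/-- A regular 0-1 matrix `M` is totally balanced iff: for distinct columns `i ≠ j`,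
if some row has a 1 in both, the columns are equal; and for distinct rows `α ≠ β`,
if some column has a 1 in both, the rows are equal. -/
theorem stmt12 (m n : ℕ) (M : Fin m → Fin n → Bool)
    (hreg : (∀ l : Fin m, ∃ i : Fin n, M l i = true) ∧
            (∀ i : Fin n, ∃ l : Fin m, M l i = true)) :
    (∀ (α β : Fin m) (i j : Fin n), α ≠ β → i ≠ j →
        M α i = true → M α j = true → M β i = true → M β j = true) ↔
    ((∀ i j : Fin n, i ≠ j →
        (∃ l : Fin m, M l i = true ∧ M l j = true) → ∀ l : Fin m, M l i = M l j) ∧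
     (∀ α β : Fin m, α ≠ β →
        (∃ r : Fin n, M α r = true ∧ M β r = true) → ∀ i : Fin n, M α i = M β i)) := by
  constructor
  · intro C
    constructor
    · rintro i j hij ⟨l₀, h₀i, h₀j⟩ l
      by_cases hl : l = l₀
      · subst hl; rw [h₀i, h₀j]
      · cases hli : M l i <;> cases hlj : M l j
        · rfl
        · exact absurd (C l₀ l j i (Ne.symm hl) (Ne.symm hij) h₀j h₀i hlj) (by simp [hli])
        · exact absurd (C l₀ l i j (Ne.symm hl) hij h₀i h₀j hli) (by simp [hlj])
        · rfl
    · rintro α β hab ⟨r, har, hbr⟩ i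
      by_cases hi : i = r
      · subst hi; rw [har, hbr]
      · cases hai : M α i <;> cases hbi : M β i
        · rfl
        · exact absurd (C β α r i (Ne.symm hab) (Ne.symm hi) hbr hbi har) (by simp [hai])
        · exact absurd (C α β r i hab (Ne.symm hi) har hai hbr) (by simp [hbi])
        · rfl
  · rintro ⟨hcol, _⟩ α β i j hab hij hai haj hbi
    rw [← hcol i j hij ⟨α, hai, haj⟩ β]; exact hbi
end
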